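/- arXiv:1112.2360 — 2 statements merged into one kernel-verified Lean document; each statement's English description precedes it below -/
import Mathlib

section
/- Let L : C ⇆ D : R be a weak right adjunction between monoidal categories (i.e., ε : LR → Id and η : Id → RL satisfy (Rε)∘(ηR) = id_R), and let ℓ be a lax-monoidal structure on R. Then the natural transformation c_{X,Y} : L(X⊗Y) → L(RLX ⊗ RLY) → LR(LX ⊗ LY) → LX ⊗ LY, given by L(η⊗η), then L(ℓ), then ε, is a colax-monoidal structure on L (i.e., it satisfies the coassociativity diagram). -/
open CategoryTheory Category MonoidalCategory

/-- A lax-monoidal structure on a functor between monoidal categories. -/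
structure LaxStruct {C D : Type*} [Category C] [Category D]
    [MonoidalCategory C] [MonoidalCategory D] (F : C ⥤ D) where
  μ : ∀ X Y : C, F.obj X ⊗ F.obj Y ⟶ F.obj (X ⊗ Y)
  η : 𝟙_ D ⟶ F.obj (𝟙_ C)
  μ_natural : ∀ {X Y X' Y' : C} (f : X ⟶ X') (g : Y ⟶ Y'),
    (F.map f ⊗ₘ F.map g) ≫ μ X' Y' = μ X Y ≫ F.map (f ⊗ₘ g)
  assoc : ∀ X Y Z : C,
    (μ X Y ⊗ₘ 𝟙 (F.obj Z)) ≫ μ (X ⊗ Y) Z ≫ F.map (α_ X Y Z).hom =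
      (α_ (F.obj X) (F.obj Y) (F.obj Z)).hom ≫ (𝟙 (F.obj X) ⊗ₘ μ Y Z) ≫ μ X (Y ⊗ Z)
  left_unit : ∀ X : C,
    (η ⊗ₘ 𝟙 (F.obj X)) ≫ μ (𝟙_ C) X ≫ F.map (λ_ X).hom = (λ_ (F.obj X)).hom
  right_unit : ∀ X : C,
    (𝟙 (F.obj X) ⊗ₘ η) ≫ μ X (𝟙_ C) ≫ F.map (ρ_ X).hom = (ρ_ (F.obj X)).hom

/-- A colax-monoidal structure on a functor between monoidal categories. -/
structure ColaxStruct {C D : Type*} [Category C] [Category D]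
    [MonoidalCategory C] [MonoidalCategory D] (F : C ⥤ D) where
  δ : ∀ X Y : C, F.obj (X ⊗ Y) ⟶ F.obj X ⊗ F.obj Y
  ε : F.obj (𝟙_ C) ⟶ 𝟙_ D
  δ_natural : ∀ {X Y X' Y' : C} (f : X ⟶ X') (g : Y ⟶ Y'),
    F.map (f ⊗ₘ g) ≫ δ X' Y' = δ X Y ≫ (F.map f ⊗ₘ F.map g)
  coassoc : ∀ X Y Z : C,
    δ (X ⊗ Y) Z ≫ (δ X Y ⊗ₘ 𝟙 (F.obj Z)) ≫ (α_ (F.obj X) (F.obj Y) (F.obj Z)).hom =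
      F.map (α_ X Y Z).hom ≫ δ X (Y ⊗ Z) ≫ (𝟙 (F.obj X) ⊗ₘ δ Y Z)
  left_counit : ∀ X : C,
    δ (𝟙_ C) X ≫ (ε ⊗ₘ 𝟙 (F.obj X)) ≫ (λ_ (F.obj X)).hom = F.map (λ_ X).hom
  right_counit : ∀ X : C,
    δ X (𝟙_ C) ≫ (𝟙 (F.obj X) ⊗ₘ ε) ≫ (ρ_ (F.obj X)).hom = F.map (ρ_ X).hom

/-- The colax-monoidal-candidate maps on `L` transferred from a lax-monoidal structure on
`R` through `(ε, η)`: `L(X⊗Y) → L(RLX ⊗ RLY) → LR(LX ⊗ LY) → LX ⊗ LY`. -/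
def transfDelta {C D : Type*} [Category C] [Category D]
    [MonoidalCategory C] [MonoidalCategory D]
    (L : C ⥤ D) (R : D ⥤ C)
    (η : 𝟭 C ⟶ L ⋙ R) (ε : R ⋙ L ⟶ 𝟭 D) (ℓ : LaxStruct R) (X Y : C) :
    L.obj (X ⊗ Y) ⟶ L.obj X ⊗ L.obj Y :=
  L.map (η.app X ⊗ₘ η.app Y) ≫ L.map (ℓ.μ (L.obj X) (L.obj Y)) ≫
    ε.app (L.obj X ⊗ L.obj Y)

/-!
Write `f ↦ L f ≫ ε` for the transpose of `f : A ⟶ R B`. The weak triangle identity says exactly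
that `g ↦ η ≫ R g` is a retraction of transposition, and `c_{X,Y}` is the transpose of
`(η ⊗ η) ≫ ℓ`, so `η ≫ R c_{X,Y} = (η ⊗ η) ≫ ℓ`. Both sides of the coassociativity square are
transposes, hence it suffices to compare the maps in `C` they are transposes of; after pushing
`R c` through `ℓ` by naturality and replacing `η ≫ R c` as above, this is the associativity of `ℓ`
together with naturality of the associator.
-/

namespace CategoryTheory

variable {C D : Type*} [Category C] [Category D] (L : C ⥤ D) (R : D ⥤ C)

lemma map_comp_counit_comp (ε : R ⋙ L ⟶ 𝟭 D) {A : C} {B B' : D} (f : A ⟶ R.obj B)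
    (g : B ⟶ B') : L.map f ≫ ε.app B ≫ g = L.map (f ≫ R.map g) ≫ ε.app B' := by
  rw [Functor.map_comp, Category.assoc]
  exact congrArg (L.map f ≫ ·) (ε.naturality g).symm

lemma unit_comp_map_map_comp_counit (η : 𝟭 C ⟶ L ⋙ R) (ε : R ⋙ L ⟶ 𝟭 D)
    (htriangle : ∀ Y : D, η.app (R.obj Y) ≫ R.map (ε.app Y) = 𝟙 (R.obj Y))
    {A : C} {B : D} (f : A ⟶ R.obj B) :
    η.app A ≫ R.map (L.map f ≫ ε.app B) = f := by
  rw [R.map_comp, ← Category.assoc, ← Functor.comp_map L R, ← η.naturality f,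
    Functor.id_map, Category.assoc, htriangle]
  exact Category.comp_id f

variable [MonoidalCategory C] [MonoidalCategory D]
  (η : 𝟭 C ⟶ L ⋙ R) (ε : R ⋙ L ⟶ 𝟭 D) (ℓ : LaxStruct R)

lemma transfDelta_eq_map_comp_counit (X Y : C) :
    transfDelta L R η ε ℓ X Y =
      L.map ((η.app X ⊗ₘ η.app Y) ≫ ℓ.μ (L.obj X) (L.obj Y)) ≫ ε.app (L.obj X ⊗ L.obj Y) := by
  rw [transfDelta, Functor.map_comp, Category.assoc]

lemma unit_comp_map_transfDelta
    (htriangle : ∀ Y : D, η.app (R.obj Y) ≫ R.map (ε.app Y) = 𝟙 (R.obj Y)) (X Y : C) :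
    η.app (X ⊗ Y) ≫ R.map (transfDelta L R η ε ℓ X Y) =
      (η.app X ⊗ₘ η.app Y) ≫ ℓ.μ (L.obj X) (L.obj Y) := by
  rw [transfDelta_eq_map_comp_counit]
  exact unit_comp_map_map_comp_counit L R η ε htriangle _

lemma unit_comp_μ_comp_map_transfDelta_coassoc
    (htriangle : ∀ Y : D, η.app (R.obj Y) ≫ R.map (ε.app Y) = 𝟙 (R.obj Y)) (X Y Z : C) :
    (η.app (X ⊗ Y) ⊗ₘ η.app Z) ≫ ℓ.μ (L.obj (X ⊗ Y)) (L.obj Z) ≫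
        R.map ((transfDelta L R η ε ℓ X Y ⊗ₘ 𝟙 (L.obj Z)) ≫ (α_ _ _ _).hom) =
      (α_ X Y Z).hom ≫ (η.app X ⊗ₘ η.app (Y ⊗ Z)) ≫ ℓ.μ (L.obj X) (L.obj (Y ⊗ Z)) ≫
        R.map (𝟙 (L.obj X) ⊗ₘ transfDelta L R η ε ℓ Y Z) := by
  have hXY := unit_comp_map_transfDelta L R η ε ℓ htriangle X Y
  have hYZ := unit_comp_map_transfDelta L R η ε ℓ htriangle Y Z
  calc _ = ((η.app X ⊗ₘ η.app Y) ⊗ₘ η.app Z) ≫ (ℓ.μ _ _ ⊗ₘ 𝟙 (R.obj (L.obj Z))) ≫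
        ℓ.μ _ _ ≫ R.map (α_ _ _ _).hom := by
        rw [R.map_comp, ← reassoc_of% ℓ.μ_natural, R.map_id, tensorHom_comp_tensorHom_assoc,
          hXY, tensorHom_comp_tensorHom_assoc]
    _ = (α_ X Y Z).hom ≫ (η.app X ⊗ₘ (η.app Y ⊗ₘ η.app Z)) ≫
        (𝟙 (R.obj (L.obj X)) ⊗ₘ ℓ.μ _ _) ≫ ℓ.μ _ _ := by
        rw [ℓ.assoc]
        exact associator_naturality_assoc (η.app X) (η.app Y) (η.app Z) _
    _ = _ := by
        rw [← ℓ.μ_natural, R.map_id]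
        simp only [tensorHom_comp_tensorHom_assoc, hYZ]

end CategoryTheory

/-- if `(L, R, ε, η)` is a weak right adjunction between monoidal categories
(i.e. the triangle identity `(Rε) ∘ (ηR) = id_R` holds) and `ℓ` is a lax-monoidal structure
on `R`, then the transferred maps `c_{X,Y} = ε ∘ L(ℓ) ∘ L(η ⊗ η)` form a colax-monoidal
structure on `L`: they satisfy the coassociativity diagram. -/
theorem statement14 {C D : Type*} [Category C] [Category D]
    [MonoidalCategory C] [MonoidalCategory D]
    (L : C ⥤ D) (R : D ⥤ C)
    (η : 𝟭 C ⟶ L ⋙ R) (ε : R ⋙ L ⟶ 𝟭 D)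
    (htriangle : ∀ Y : D, η.app (R.obj Y) ≫ R.map (ε.app Y) = 𝟙 (R.obj Y))
    (ℓ : LaxStruct R) :
    ∀ X Y Z : C,
      transfDelta L R η ε ℓ (X ⊗ Y) Z ≫
          (transfDelta L R η ε ℓ X Y ⊗ₘ 𝟙 (L.obj Z)) ≫
          (α_ (L.obj X) (L.obj Y) (L.obj Z)).hom =
        L.map (α_ X Y Z).hom ≫ transfDelta L R η ε ℓ X (Y ⊗ Z) ≫
          (𝟙 (L.obj X) ⊗ₘ transfDelta L R η ε ℓ Y Z) := by
  intro X Y Z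
  rw [transfDelta_eq_map_comp_counit L R η ε ℓ (X ⊗ Y) Z,
    transfDelta_eq_map_comp_counit L R η ε ℓ X (Y ⊗ Z)]
  simp only [Category.assoc]
  rw [map_comp_counit_comp, map_comp_counit_comp, ← L.map_comp_assoc]
  simp only [Category.assoc]
  rw [unit_comp_μ_comp_map_transfDelta_coassoc L R η ε ℓ htriangle]
end

section
/- Let I be a small category, C a complete category and D a cocomplete category. Suppose D_L : I → Fun(C, D)^op and D_R : I → Fun(D, C) are diagrams such that for each i ∈ I, the pair (D_L(i), D_R(i)) is a weak right adjunction (with transformations Θ(i), Υ(i) satisfying Θ(i)∘Υ(i) = id), compatibly with the morphisms of I. Then the functors colim_I D_L : C → D and lim_I D_R : D → C carry a natural weak right adjunction structure, with Θ and Υ given by the limits of the Θ(i) and Υ(i), using the isomorphisms Hom_D(colim D_L(X), Y) ≅ lim_i Hom_D(D_L(i)(X), Y) and Hom_C(X, lim D_R(Y)) ≅ lim_i Hom_C(X, D_R(i)(Y)). -/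
open CategoryTheory Category Limits Opposite

universe v u₁ u₂

/-!
Since (co)limits of functors are computed pointwise, `Hom(colim_i L_i X, Y) ≅ lim_i Hom(L_i X, Y)`
through the colimit injections and `Hom(X, lim_i R_i Y) ≅ lim_i Hom(X, R_i Y)` through the limit
projections. Compatibility of the `Θ(i)`, `Υ(i)` with the morphisms of `I` says that they are maps
of these diagrams of hom-sets, so they induce `Θ∞`, `Υ∞` between the limits. Binaturality and
`Θ∞ ∘ Υ∞ = id` can be tested componentwise, where they are those of the `Θ(i)`, `Υ(i)`.
-/

section

variable {C D I : Type*} [Category C] [Category D] [Category I]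
  [HasLimitsOfShape I C] [HasColimitsOfShape Iᵒᵖ D] {DL : I ⥤ (C ⥤ D)ᵒᵖ} {DR : I ⥤ (D ⥤ C)}

variable
  (Θ : ∀ (i : I) (X : C) (Y : D), ((DL.obj i).unop.obj X ⟶ Y) → (X ⟶ (DR.obj i).obj Y))
  (hΘcompat : ∀ {i j : I} (f : i ⟶ j) (X : C) (Y : D) (φ : (DL.obj i).unop.obj X ⟶ Y),
    Θ j X Y ((DL.map f).unop.app X ≫ φ) = Θ i X Y φ ≫ (DR.map f).app Y)

noncomputable def limΘ (X : C) (Y : D) (φ : (colimit DL.leftOp).obj X ⟶ Y) :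
    X ⟶ (limit DR).obj Y :=
  limit.lift (DR ⋙ (evaluation D C).obj Y)
      { pt := X
        π :=
          { app := fun i => Θ i X Y ((colimit.ι DL.leftOp (op i)).app X ≫ φ)
            naturality := fun i j f => by
              have hι := congr_app (colimit.w DL.leftOp f.op) X
              dsimp at hι ⊢
              rw [id_comp, ← hΘcompat f, ← assoc, hι] } } ≫
    (limitObjIsoLimitCompEvaluation DR Y).inv

@[simp]
theorem limΘ_π (i : I) (X : C) (Y : D) (φ : (colimit DL.leftOp).obj X ⟶ Y) :
    limΘ Θ hΘcompat X Y φ ≫ (limit.π DR i).app Y =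
      Θ i X Y ((colimit.ι DL.leftOp (op i)).app X ≫ φ) := by
  simp [limΘ]

theorem limΘ_naturality
    (hΘ : ∀ (i : I) {X' X : C} {Y Y' : D} (f : X' ⟶ X) (φ : (DL.obj i).unop.obj X ⟶ Y)
      (g : Y ⟶ Y'),
      Θ i X' Y' ((DL.obj i).unop.map f ≫ φ ≫ g) = f ≫ Θ i X Y φ ≫ (DR.obj i).map g)
    {X' X : C} {Y Y' : D} (f : X' ⟶ X) (φ : (colimit DL.leftOp).obj X ⟶ Y) (g : Y ⟶ Y') :
    limΘ Θ hΘcompat X' Y' ((colimit DL.leftOp).map f ≫ φ ≫ g) =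
      f ≫ limΘ Θ hΘcompat X Y φ ≫ (limit DR).map g := by
  refine limit_obj_ext fun i => ?_
  have hι : (colimit.ι DL.leftOp (op i)).app X' ≫ (colimit DL.leftOp).map f =
      (DL.obj i).unop.map f ≫ (colimit.ι DL.leftOp (op i)).app X :=
    ((colimit.ι DL.leftOp (op i)).naturality f).symm
  calc _ = Θ i X' Y'
          ((DL.obj i).unop.map f ≫ ((colimit.ι DL.leftOp (op i)).app X ≫ φ) ≫ g) := by
        rw [limΘ_π, reassoc_of% hι, assoc]
    _ = f ≫ (limΘ Θ hΘcompat X Y φ ≫ (limit.π DR i).app Y) ≫ (DR.obj i).map g := by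
        rw [hΘ, limΘ_π]
    _ = _ := by simp only [assoc, NatTrans.naturality]

variable
  (Υ : ∀ (i : I) (X : C) (Y : D), (X ⟶ (DR.obj i).obj Y) → ((DL.obj i).unop.obj X ⟶ Y))
  (hΥcompat : ∀ {i j : I} (f : i ⟶ j) (X : C) (Y : D) (ψ : X ⟶ (DR.obj i).obj Y),
    Υ j X Y (ψ ≫ (DR.map f).app Y) = (DL.map f).unop.app X ≫ Υ i X Y ψ)

noncomputable def colimΥ (X : C) (Y : D) (ψ : X ⟶ (limit DR).obj Y) :
    (colimit DL.leftOp).obj X ⟶ Y :=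
  (colimitObjIsoColimitCompEvaluation DL.leftOp X).hom ≫
    colimit.desc (DL.leftOp ⋙ (evaluation C D).obj X)
      { pt := Y
        ι :=
          { app := fun k => Υ k.unop X Y (ψ ≫ (limit.π DR k.unop).app Y)
            naturality := fun k k' f => by
              have hπ := congr_app (limit.w DR f.unop) Y
              dsimp at hπ ⊢
              rw [comp_id, ← hΥcompat f.unop, assoc, hπ] } }

@[simp]
theorem ι_colimΥ (i : I) (X : C) (Y : D) (ψ : X ⟶ (limit DR).obj Y) :
    (colimit.ι DL.leftOp (op i)).app X ≫ colimΥ Υ hΥcompat X Y ψ =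
      Υ i X Y (ψ ≫ (limit.π DR i).app Y) := by
  simp [colimΥ]

theorem colimΥ_naturality
    (hΥ : ∀ (i : I) {X' X : C} {Y Y' : D} (f : X' ⟶ X) (ψ : X ⟶ (DR.obj i).obj Y)
      (g : Y ⟶ Y'),
      Υ i X' Y' (f ≫ ψ ≫ (DR.obj i).map g) = (DL.obj i).unop.map f ≫ Υ i X Y ψ ≫ g)
    {X' X : C} {Y Y' : D} (f : X' ⟶ X) (ψ : X ⟶ (limit DR).obj Y) (g : Y ⟶ Y') :
    colimΥ Υ hΥcompat X' Y' (f ≫ ψ ≫ (limit DR).map g) =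
      (colimit DL.leftOp).map f ≫ colimΥ Υ hΥcompat X Y ψ ≫ g := by
  refine colimit_obj_ext fun i => ?_
  have hι : (colimit.ι DL.leftOp i).app X' ≫ (colimit DL.leftOp).map f =
      (DL.obj i.unop).unop.map f ≫ (colimit.ι DL.leftOp i).app X :=
    ((colimit.ι DL.leftOp i).naturality f).symm
  calc _ = Υ i.unop X' Y' (f ≫ (ψ ≫ (limit.π DR i.unop).app Y) ≫ (DR.obj i.unop).map g) := by
        rw [ι_colimΥ]; simp only [assoc, NatTrans.naturality]
    _ = (DL.obj i.unop).unop.map f ≫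
          ((colimit.ι DL.leftOp i).app X ≫ colimΥ Υ hΥcompat X Y ψ) ≫ g := by
        rw [hΥ, ι_colimΥ]
    _ = _ := by rw [reassoc_of% hι, assoc]

theorem limΘ_colimΥ
    (hretr : ∀ (i : I) (X : C) (Y : D) (ψ : X ⟶ (DR.obj i).obj Y), Θ i X Y (Υ i X Y ψ) = ψ)
    (X : C) (Y : D) (ψ : X ⟶ (limit DR).obj Y) :
    limΘ Θ hΘcompat X Y (colimΥ Υ hΥcompat X Y ψ) = ψ :=
  limit_obj_ext fun i => by rw [limΘ_π, ι_colimΥ, hretr]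

end

/-- let `I` be a small index category, `C` complete, `D` cocomplete, and let
`D_L : I ⥤ Fun(C,D)ᵒᵖ`, `D_R : I ⥤ Fun(D,C)` be diagrams which form weak right adjoint
pairs `(D_L(i), D_R(i))` (binatural `Θ(i), Υ(i)` with `Θ(i) ∘ Υ(i) = id`), compatibly with
the morphisms of `I`. Then `colim D_L` and `lim D_R` carry a weak right adjunction whose
`Θ∞, Υ∞` are the limits of the `Θ(i), Υ(i)` (characterized by the colimit injections and
limit projections). -/
theorem statement16 {C : Type u₁} {D : Type u₂} {I : Type v}
    [Category.{v} C] [Category.{v} D] [SmallCategory I]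
    [HasLimits C] [HasColimits D]
    (DL : I ⥤ (C ⥤ D)ᵒᵖ) (DR : I ⥤ (D ⥤ C))
    (Θ : ∀ (i : I) (X : C) (Y : D),
      ((DL.obj i).unop.obj X ⟶ Y) → (X ⟶ (DR.obj i).obj Y))
    (Υ : ∀ (i : I) (X : C) (Y : D),
      (X ⟶ (DR.obj i).obj Y) → ((DL.obj i).unop.obj X ⟶ Y))
    (hΘ : ∀ (i : I) {X' X : C} {Y Y' : D} (f : X' ⟶ X)
      (φ : (DL.obj i).unop.obj X ⟶ Y) (g : Y ⟶ Y'),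
      Θ i X' Y' ((DL.obj i).unop.map f ≫ φ ≫ g) = f ≫ Θ i X Y φ ≫ (DR.obj i).map g)
    (hΥ : ∀ (i : I) {X' X : C} {Y Y' : D} (f : X' ⟶ X)
      (ψ : X ⟶ (DR.obj i).obj Y) (g : Y ⟶ Y'),
      Υ i X' Y' (f ≫ ψ ≫ (DR.obj i).map g) = (DL.obj i).unop.map f ≫ Υ i X Y ψ ≫ g)
    (hretr : ∀ (i : I) (X : C) (Y : D) (ψ : X ⟶ (DR.obj i).obj Y),
      Θ i X Y (Υ i X Y ψ) = ψ)
    (hΘcompat : ∀ {i j : I} (f : i ⟶ j) (X : C) (Y : D)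
      (φ : (DL.obj i).unop.obj X ⟶ Y),
      Θ j X Y ((DL.map f).unop.app X ≫ φ) = Θ i X Y φ ≫ (DR.map f).app Y)
    (hΥcompat : ∀ {i j : I} (f : i ⟶ j) (X : C) (Y : D)
      (ψ : X ⟶ (DR.obj i).obj Y),
      Υ j X Y (ψ ≫ (DR.map f).app Y) = (DL.map f).unop.app X ≫ Υ i X Y ψ) :
    ∃ (Θ' : ∀ (X : C) (Y : D),
        ((colimit DL.leftOp).obj X ⟶ Y) → (X ⟶ (limit DR).obj Y))
      (Υ' : ∀ (X : C) (Y : D),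
        (X ⟶ (limit DR).obj Y) → ((colimit DL.leftOp).obj X ⟶ Y)),
      (∀ {X' X : C} {Y Y' : D} (f : X' ⟶ X)
        (φ : (colimit DL.leftOp).obj X ⟶ Y) (g : Y ⟶ Y'),
        Θ' X' Y' ((colimit DL.leftOp).map f ≫ φ ≫ g) =
          f ≫ Θ' X Y φ ≫ (limit DR).map g) ∧
      (∀ {X' X : C} {Y Y' : D} (f : X' ⟶ X)
        (ψ : X ⟶ (limit DR).obj Y) (g : Y ⟶ Y'),
        Υ' X' Y' (f ≫ ψ ≫ (limit DR).map g) =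
          (colimit DL.leftOp).map f ≫ Υ' X Y ψ ≫ g) ∧
      (∀ (X : C) (Y : D) (ψ : X ⟶ (limit DR).obj Y), Θ' X Y (Υ' X Y ψ) = ψ) ∧
      (∀ (i : I) (X : C) (Y : D) (φ : (colimit DL.leftOp).obj X ⟶ Y),
        Θ' X Y φ ≫ (limit.π DR i).app Y =
          Θ i X Y ((colimit.ι DL.leftOp (op i)).app X ≫ φ)) ∧
      (∀ (i : I) (X : C) (Y : D) (ψ : X ⟶ (limit DR).obj Y),
        (colimit.ι DL.leftOp (op i)).app X ≫ Υ' X Y ψ =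
          Υ i X Y (ψ ≫ (limit.π DR i).app Y)) :=
  ⟨limΘ Θ hΘcompat, colimΥ Υ hΥcompat, limΘ_naturality Θ hΘcompat hΘ,
    colimΥ_naturality Υ hΥcompat hΥ, limΘ_colimΥ Θ hΘcompat Υ hΥcompat hretr, limΘ_π Θ hΘcompat,
    ι_colimΥ Υ hΥcompat⟩
end
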